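/- Let k_n be defined by k_n^{-1} = ∫_{Δ^{n-1}} |ℓ|^{-n} dμ_n where |ℓ| = max_i ℓ_i and μ_n is the normalized Lebesgue measure on the open standard simplex Δ^{n-1} ⊆ ℝ^n. Then for every integer p ≥ 1, k_n^{-1} ≥ (2p)^n · (1 - n·((2p-1)/(2p))^{n-1}). Consequently the sequence (2p)^n · k_n is bounded as n → ∞. -/

import Mathlib

open MeasureTheory Finset Filter

/-- The open standard simplex Δ^m ⊂ ℝ^{m+1}. -/
def Simplex (m : ℕ) : Set (Fin (m+1) → ℝ) :=
  {ℓ | (∀ i, 0 < ℓ i) ∧ ∑ i, ℓ i = 1}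

/-- Parametrization of the hyperplane ∑ ℓ i = 1 by ℝ^m. -/
noncomputable def emb (m : ℕ) (x : Fin m → ℝ) : Fin (m+1) → ℝ :=
  Fin.snoc x (1 - ∑ i, x i)

/-- Normalized Lebesgue measure of a subset of the simplex Δ^m,
computed as a ratio of Lebesgue volumes in the parametrizing chart. -/
noncomputable def simplexMeasure (m : ℕ) (A : Set (Fin (m+1) → ℝ)) : ENNReal :=
  volume (emb m ⁻¹' A) / volume (emb m ⁻¹' (Simplex m))

/-- The set Γ_p of length vectors for which every p-element subset is short. -/
def Gamma (m p : ℕ) : Set (Fin (m+1) → ℝ) :=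
  {ℓ ∈ Simplex m | ∀ J : Finset (Fin (m+1)), J.card = p → ∑ i ∈ J, ℓ i < 1/2}

/-- The set Λ_p where some coordinate is ≥ 1/(2p). -/
def Lambda (m p : ℕ) : Set (Fin (m+1) → ℝ) :=
  {ℓ ∈ Simplex m | ∃ i, 1/(2*(p:ℝ)) ≤ ℓ i}

/-- The normalized Lebesgue measure μ_n on the simplex Δ^m ⊂ ℝ^{m+1},
as an actual measure on ℝ^{m+1} (supported on the simplex). -/
noncomputable def simplexProb (m : ℕ) : Measure (Fin (m+1) → ℝ) :=
  (m.factorial : ENNReal) • Measure.map (emb m) (volume.restrict (emb m ⁻¹' Simplex m))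

open scoped Topology Pointwise ENNReal

/-!
In the chart `emb`, the simplex is the corner simplex `{x > 0, ∑ x < 1}` of volume `1/m!`
(slice along the first coordinate), and `{ℓ | c ≤ ℓ i}` lies in a translate of the corner
simplex of every size `s > 1 - c`, so by continuity in `s` it has `μₙ`-measure at most
`(1 - c)ⁿ⁻¹`. On the complement of these
`n` sets every coordinate is below `c = 1/(2p)`, hence `|ℓ|⁻ⁿ ≥ (2p)ⁿ` there, and the union bound
gives the inequality. As `n (1 - c)ⁿ⁻¹ → 0`, the integral is eventually at least `(2p)ⁿ / 2`.
-/

def cornerSimplex (m : ℕ) (s : ℝ) : Set (Fin m → ℝ) :=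
  {x | (∀ i, 0 < x i) ∧ ∑ i, x i < s}

lemma cornerSimplex_succ (m : ℕ) (s : ℝ) :
    cornerSimplex (m + 1) s = MeasurableEquiv.piFinSuccAbove (fun _ => ℝ) 0 ⁻¹'
      {q | q.1 ∈ Set.Ioo 0 s ∧ q.2 ∈ cornerSimplex m (s - q.1)} := by
  ext x
  simp only [cornerSimplex, Set.mem_preimage, Set.mem_ofPred_eq, Set.mem_Ioo,
    MeasurableEquiv.piFinSuccAbove_apply, Fin.insertNthEquiv_zero, Fin.consEquiv_symm_apply,
    Fin.forall_fin_succ, Fin.sum_univ_succ, lt_sub_iff_add_lt']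
  constructor
  · rintro ⟨⟨h0, htail⟩, hsum⟩
    have := Finset.sum_nonneg fun i (_ : i ∈ Finset.univ) => (htail i).le
    exact ⟨⟨h0, by linarith⟩, htail, hsum⟩
  · rintro ⟨⟨h0, -⟩, htail, hsum⟩
    exact ⟨⟨h0, htail⟩, hsum⟩

lemma integral_sub_pow_div_factorial (m : ℕ) {s : ℝ} (hs : 0 ≤ s) :
    ∫ t in Set.Ioo 0 s, (s - t) ^ m / m.factorial = s ^ (m + 1) / (m + 1).factorial := by
  rw [integral_Ioc_eq_integral_Ioo.symm, ← intervalIntegral.integral_of_le hs,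
    intervalIntegral.integral_div, intervalIntegral.integral_comp_sub_left (fun t => t ^ m),
    sub_self, sub_zero, integral_pow, Nat.factorial_succ]
  push_cast
  field_simp
  ring

lemma volume_cornerSimplex (m : ℕ) {s : ℝ} (hs : 0 < s) :
    volume (cornerSimplex m s) = ENNReal.ofReal (s ^ m / m.factorial) := by
  induction m generalizing s with
  | zero => simp [cornerSimplex, hs, volume_pi]
  | succ m ih =>
    have hB : MeasurableSet
        {q : ℝ × (Fin m → ℝ) | q.1 ∈ Set.Ioo 0 s ∧ q.2 ∈ cornerSimplex m (s - q.1)} := by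
      unfold cornerSimplex; measurability
    rw [cornerSimplex_succ, (volume_preserving_piFinSuccAbove (fun _ => ℝ) 0).measure_preimage
      hB.nullMeasurableSet, Measure.volume_eq_prod, Measure.prod_apply hB]
    calc ∫⁻ t, volume (Prod.mk t ⁻¹' {q | q.1 ∈ Set.Ioo 0 s ∧ q.2 ∈ cornerSimplex m (s - q.1)})
        = ∫⁻ t, (Set.Ioo 0 s).indicator
            (fun t => ENNReal.ofReal ((s - t) ^ m / m.factorial)) t := by
          refine lintegral_congr fun t => ?_
          by_cases ht : t ∈ Set.Ioo 0 s
          · simp only [Set.preimage_ofPred_eq, ht, true_and, Set.ofPred_mem_eq,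
              Set.indicator_of_mem, ih (sub_pos.2 ht.2)]
          · simp only [Set.preimage_ofPred_eq, ht, false_and, Set.ofPred_false, measure_empty,
              Set.indicator_of_notMem, not_false_eq_true]
      _ = ENNReal.ofReal (∫ t in Set.Ioo 0 s, (s - t) ^ m / m.factorial) := by
          rw [lintegral_indicator measurableSet_Ioo, ofReal_integral_eq_lintegral_ofReal]
          · exact (Continuous.integrableOn_Icc (by fun_prop)).mono_set Set.Ioo_subset_Icc_self
          · filter_upwards [self_mem_ae_restrict measurableSet_Ioo] with t ht
            have := sub_pos.2 ht.2
            positivity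
      _ = ENNReal.ofReal (s ^ (m + 1) / (m + 1).factorial) := by
          rw [integral_sub_pow_div_factorial m hs.le]

lemma volume_le_of_forall_subset_vadd_cornerSimplex {m : ℕ} {A : Set (Fin m → ℝ)} {s : ℝ}
    (hs : 0 ≤ s) (hA : ∀ s' > s, ∃ v : Fin m → ℝ, A ⊆ v +ᵥ cornerSimplex m s') :
    volume A ≤ ENNReal.ofReal (s ^ m / m.factorial) := by
  have hcont : Tendsto (fun s' : ℝ => ENNReal.ofReal (s' ^ m / m.factorial)) (𝓝[>] s)
      (𝓝 (ENNReal.ofReal (s ^ m / m.factorial))) :=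
    ((ENNReal.continuous_ofReal.comp (by fun_prop)).tendsto s).mono_left nhdsWithin_le_nhds
  refine ge_of_tendsto hcont (eventually_nhdsWithin_of_forall fun s' hs' => ?_)
  obtain ⟨v, hv⟩ := hA s' hs'
  calc volume A ≤ volume (v +ᵥ cornerSimplex m s') := measure_mono hv
    _ = _ := by rw [measure_vadd, volume_cornerSimplex m (hs.trans_lt hs')]

lemma exists_vadd_cornerSimplex_superset {m : ℕ} (i : Fin (m + 1)) {c s : ℝ} (hs : 1 - c < s) :
    ∃ v : Fin m → ℝ, emb m ⁻¹' {ℓ | c ≤ ℓ i} ∩ cornerSimplex m 1 ⊆ v +ᵥ cornerSimplex m s := by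
  induction i using Fin.lastCases with
  | last =>
    refine ⟨0, fun x ⟨hc, hx⟩ => ?_⟩
    rw [zero_vadd]
    simp only [Set.mem_preimage, Set.mem_ofPred_eq, emb, Fin.snoc_last] at hc
    exact ⟨hx.1, by linarith⟩
  | cast j =>
    refine ⟨Pi.single j (1 - s), fun x ⟨hc, hx⟩ => ?_⟩
    simp only [Set.mem_preimage, Set.mem_ofPred_eq, emb, Fin.snoc_castSucc] at hc
    rw [Set.mem_vadd_set_iff_neg_vadd_mem, vadd_eq_add]
    refine ⟨fun k => ?_, ?_⟩
    · rcases eq_or_ne k j with rfl | hk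
      · simp only [Pi.add_apply, Pi.neg_apply, Pi.single_eq_same, neg_sub]
        linarith
      · simpa [hk] using hx.1 k
    · simp only [Pi.add_apply, Pi.neg_apply, Finset.sum_add_distrib, Finset.sum_neg_distrib,
        Finset.sum_pi_single', Finset.mem_univ, if_true, neg_sub]
      linarith [hx.2]

lemma measurableSet_Simplex (m : ℕ) : MeasurableSet (Simplex m) := by
  unfold Simplex; measurability

lemma measurable_emb (m : ℕ) : Measurable (emb m) := by
  unfold emb; fun_prop

lemma sum_emb (m : ℕ) (x : Fin m → ℝ) : ∑ i, emb m x i = 1 := by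
  simp [emb, Fin.sum_univ_castSucc]

lemma emb_preimage_Simplex (m : ℕ) : emb m ⁻¹' Simplex m = cornerSimplex m 1 := by
  ext x
  simp only [Simplex, Set.mem_preimage, Set.mem_ofPred_eq, sum_emb, and_true]
  simp only [cornerSimplex, Set.mem_ofPred_eq, Fin.forall_fin_succ', emb, Fin.snoc_castSucc,
    Fin.snoc_last, sub_pos]

lemma simplexProb_apply (m : ℕ) {A : Set (Fin (m + 1) → ℝ)} (hA : MeasurableSet A) :
    simplexProb m A = m.factorial * volume (emb m ⁻¹' A ∩ cornerSimplex m 1) := by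
  rw [simplexProb, Measure.smul_apply, Measure.map_apply (measurable_emb m) hA,
    Measure.restrict_apply (measurable_emb m hA), emb_preimage_Simplex, smul_eq_mul]

lemma natCast_factorial_mul_ofReal_div (m : ℕ) (a : ℝ) :
    (m.factorial : ℝ≥0∞) * ENNReal.ofReal (a / m.factorial) = ENNReal.ofReal a := by
  rw [← ENNReal.ofReal_natCast, ← ENNReal.ofReal_mul (by positivity),
    mul_div_cancel₀ _ (by positivity)]

instance isProbabilityMeasure_simplexProb (m : ℕ) : IsProbabilityMeasure (simplexProb m) := by
  constructor
  rw [simplexProb_apply m MeasurableSet.univ, Set.preimage_univ, Set.univ_inter,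
    volume_cornerSimplex m one_pos, one_pow, natCast_factorial_mul_ofReal_div, ENNReal.ofReal_one]

lemma ae_mem_Simplex_simplexProb (m : ℕ) : ∀ᵐ ℓ ∂simplexProb m, ℓ ∈ Simplex m := by
  rw [ae_iff]
  change simplexProb m (Simplex m)ᶜ = 0
  rw [simplexProb_apply m (measurableSet_Simplex m).compl,
    Set.preimage_compl, emb_preimage_Simplex, Set.compl_inter_self, measure_empty, mul_zero]

lemma simplexProb_real_coord_ge_le (m : ℕ) (i : Fin (m + 1)) {c : ℝ} (hc : c ≤ 1) :
    (simplexProb m).real {ℓ | c ≤ ℓ i} ≤ (1 - c) ^ m := by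
  have hmeas : MeasurableSet {ℓ : Fin (m + 1) → ℝ | c ≤ ℓ i} :=
    measurableSet_le measurable_const (measurable_pi_apply i)
  refine ENNReal.toReal_le_of_le_ofReal (pow_nonneg (sub_nonneg.2 hc) _) ?_
  rw [simplexProb_apply m hmeas, ← natCast_factorial_mul_ofReal_div]
  gcongr
  exact volume_le_of_forall_subset_vadd_cornerSimplex (sub_nonneg.2 hc)
    fun s hs => exists_vadd_cornerSimplex_superset i hs

lemma inv_le_iSup_of_mem_Simplex {m : ℕ} {ℓ : Fin (m + 1) → ℝ} (hℓ : ℓ ∈ Simplex m) :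
    ((m : ℝ) + 1)⁻¹ ≤ ⨆ i, ℓ i := by
  have hsum : ∑ i, ℓ i ≤ (m + 1 : ℕ) • ⨆ i, ℓ i := by
    simpa using Finset.sum_le_card_nsmul Finset.univ ℓ _
      fun i _ => le_ciSup (Set.finite_range ℓ).bddAbove i
  rw [hℓ.2, nsmul_eq_mul] at hsum
  rw [inv_le_iff_one_le_mul₀' (by positivity)]
  exact_mod_cast hsum

lemma iSup_pos_of_mem_Simplex {m : ℕ} {ℓ : Fin (m + 1) → ℝ} (hℓ : ℓ ∈ Simplex m) :
    0 < ⨆ i, ℓ i :=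
  (inv_pos.2 (by positivity)).trans_le (inv_le_iSup_of_mem_Simplex hℓ)

lemma measurable_inv_iSup_pow (m k : ℕ) :
    Measurable fun ℓ : Fin m → ℝ => (⨆ i, ℓ i)⁻¹ ^ k :=
  ((Measurable.iSup measurable_pi_apply).inv).pow_const k

lemma integrable_inv_iSup_pow {m : ℕ} (μ : Measure (Fin (m + 1) → ℝ)) [IsFiniteMeasure μ]
    (hμ : ∀ᵐ ℓ ∂μ, ℓ ∈ Simplex m) :
    Integrable (fun ℓ : Fin (m + 1) → ℝ => (⨆ i, ℓ i)⁻¹ ^ (m + 1)) μ := by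
  refine .of_bound (measurable_inv_iSup_pow _ _).aestronglyMeasurable (((m : ℝ) + 1) ^ (m + 1))
    (hμ.mono fun ℓ hℓ => ?_)
  have hpos := iSup_pos_of_mem_Simplex hℓ
  rw [norm_pow, Real.norm_of_nonneg (inv_nonneg.2 hpos.le)]
  exact pow_le_pow_left₀ (inv_nonneg.2 hpos.le)
    (inv_le_of_inv_le₀ (by positivity) (inv_le_iSup_of_mem_Simplex hℓ)) _

lemma one_sub_sum_measureReal_le_measureReal_forall_lt {ι : Type*} [Fintype ι]
    (μ : Measure (ι → ℝ)) [IsProbabilityMeasure μ] (c : ℝ) :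
    1 - ∑ i, μ.real {ℓ | c ≤ ℓ i} ≤ μ.real {ℓ | ∀ i, ℓ i < c} := by
  have hcover : Set.univ ⊆ {ℓ : ι → ℝ | ∀ i, ℓ i < c} ∪ ⋃ i, {ℓ | c ≤ ℓ i} := fun ℓ _ => by
    by_cases h : ∀ i, ℓ i < c
    · exact Or.inl h
    · obtain ⟨i, hi⟩ := not_forall.1 h
      exact Or.inr (Set.mem_iUnion.2 ⟨i, le_of_not_gt hi⟩)
  have := calc
    1 = μ.real Set.univ := probReal_univ.symm
    _ ≤ μ.real ({ℓ | ∀ i, ℓ i < c} ∪ ⋃ i, {ℓ | c ≤ ℓ i}) := measureReal_mono hcover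
    _ ≤ μ.real {ℓ | ∀ i, ℓ i < c} + μ.real (⋃ i, {ℓ | c ≤ ℓ i}) := measureReal_union_le _ _
    _ ≤ μ.real {ℓ | ∀ i, ℓ i < c} + ∑ i, μ.real {ℓ | c ≤ ℓ i} := by
      gcongr
      exact measureReal_iUnion_fintype_le _
  linarith

lemma mul_one_sub_sum_le_integral_inv_iSup_pow {m : ℕ} (μ : Measure (Fin (m + 1) → ℝ))
    [IsProbabilityMeasure μ] (hμ : ∀ᵐ ℓ ∂μ, ℓ ∈ Simplex m) {c : ℝ} (hc : 0 < c) :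
    c⁻¹ ^ (m + 1) * (1 - ∑ i, μ.real {ℓ | c ≤ ℓ i}) ≤ ∫ ℓ, (⨆ i, ℓ i)⁻¹ ^ (m + 1) ∂μ := by
  set G := {ℓ : Fin (m + 1) → ℝ | ∀ i, ℓ i < c}
  have hG : MeasurableSet G := by
    simp only [G, Set.ofPred_forall]
    exact .iInter fun i => measurableSet_lt (measurable_pi_apply i) measurable_const
  calc c⁻¹ ^ (m + 1) * (1 - ∑ i, μ.real {ℓ | c ≤ ℓ i})
      ≤ c⁻¹ ^ (m + 1) * μ.real G := by
        gcongr
        exact one_sub_sum_measureReal_le_measureReal_forall_lt μ c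
    _ = ∫ ℓ, G.indicator (fun _ => c⁻¹ ^ (m + 1)) ℓ ∂μ := by
        rw [integral_indicator_const _ hG, smul_eq_mul, mul_comm]
    _ ≤ ∫ ℓ, (⨆ i, ℓ i)⁻¹ ^ (m + 1) ∂μ := by
        refine integral_mono_ae ((integrable_const _).indicator hG) (integrable_inv_iSup_pow μ hμ)
          (hμ.mono fun ℓ hℓ => ?_)
        have hpos := iSup_pos_of_mem_Simplex hℓ
        by_cases hℓG : ℓ ∈ G
        · rw [Set.indicator_of_mem hℓG]
          exact pow_le_pow_left₀ (inv_nonneg.2 hc.le)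
            (inv_anti₀ hpos (ciSup_le fun i => (hℓG i).le)) _
        · rw [Set.indicator_of_notMem hℓG]
          exact pow_nonneg (inv_nonneg.2 hpos.le) _

lemma mul_one_sub_le_integral_simplexProb (m : ℕ) {c : ℝ} (hc₀ : 0 < c) (hc₁ : c ≤ 1) :
    c⁻¹ ^ (m + 1) * (1 - (m + 1) * (1 - c) ^ m)
      ≤ ∫ ℓ, (⨆ i, ℓ i)⁻¹ ^ (m + 1) ∂simplexProb m := by
  refine le_trans ?_ (mul_one_sub_sum_le_integral_inv_iSup_pow _ (ae_mem_Simplex_simplexProb m) hc₀)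
  gcongr
  calc ∑ i, (simplexProb m).real {ℓ | c ≤ ℓ i} ≤ ∑ _i : Fin (m + 1), (1 - c) ^ m :=
        Finset.sum_le_sum fun i _ => simplexProb_real_coord_ge_le m i hc₁
    _ = (m + 1) * (1 - c) ^ m := by simp

lemma exists_pow_mul_inv_le {a : ℕ → ℝ} {b q : ℝ} (hb : 0 < b) (hq₀ : 0 ≤ q) (hq₁ : q < 1)
    (ha : ∀ m : ℕ, b ^ (m + 1) * (1 - (m + 1) * q ^ m) ≤ a m) :
    ∃ C, ∀ m, b ^ (m + 1) * (a m)⁻¹ ≤ C := by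
  have htend : Tendsto (fun m : ℕ => ((m : ℝ) + 1) * q ^ m) atTop (𝓝 0) := by
    simpa [add_mul] using (tendsto_self_mul_const_pow_of_lt_one hq₀ hq₁).add
      (tendsto_pow_atTop_nhds_zero_of_lt_one hq₀ hq₁)
  have hev : ∀ᶠ m in atTop, b ^ (m + 1) * (a m)⁻¹ ≤ 2 := by
    filter_upwards [htend.eventually (eventually_le_nhds one_half_pos)] with m hm
    have hbm : 0 < b ^ (m + 1) := by positivity
    have ham : b ^ (m + 1) / 2 ≤ a m := (ha m).trans' (by nlinarith)
    rw [mul_inv_le_iff₀ (by linarith)]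
    linarith
  obtain ⟨C, hC⟩ := (isBoundedUnder_of_eventually_le hev).bddAbove_range
  exact ⟨C, fun m => hC ⟨m, rfl⟩⟩

/-- with k_n⁻¹ = ∫ |ℓ|^{-n} dμ_n (n = m+1), for every p ≥ 1 one has
k_n⁻¹ ≥ (2p)^n·(1 - n·((2p-1)/(2p))^{n-1}), and consequently the sequence
(2p)^n·k_n is bounded as n → ∞. -/
theorem stmt14 (p : ℕ) (hp : 1 ≤ p) :
    (∀ m : ℕ, (2*(p:ℝ))^(m+1) * (1 - (m+1) * ((2*(p:ℝ)-1)/(2*p))^m)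
        ≤ ∫ ℓ, (⨆ i, ℓ i)⁻¹ ^ (m+1) ∂(simplexProb m))
    ∧ ∃ C : ℝ, ∀ m : ℕ,
        (2*(p:ℝ))^(m+1) * (∫ ℓ, (⨆ i, ℓ i)⁻¹ ^ (m+1) ∂(simplexProb m))⁻¹ ≤ C := by
  have hp' : (1 : ℝ) ≤ p := by exact_mod_cast hp
  have hc₀ : 0 < (2 * (p : ℝ))⁻¹ := by positivity
  have hc₁ : (2 * (p : ℝ))⁻¹ ≤ 1 := inv_le_one_of_one_le₀ (by linarith)
  have hq : 1 - (2 * (p : ℝ))⁻¹ = (2 * p - 1) / (2 * p) := by field_simp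
  have hlower : ∀ m : ℕ, (2 * (p : ℝ)) ^ (m + 1) * (1 - (m + 1) * ((2 * p - 1) / (2 * p)) ^ m)
      ≤ ∫ ℓ, (⨆ i, ℓ i)⁻¹ ^ (m + 1) ∂simplexProb m := fun m => by
    simpa only [inv_inv, hq] using mul_one_sub_le_integral_simplexProb m hc₀ hc₁
  exact ⟨hlower, exists_pow_mul_inv_le (by positivity) (hq ▸ sub_nonneg.2 hc₁)
    (hq ▸ sub_lt_self 1 hc₀) hlower⟩
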